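/- arXiv:2008.06636 — 3 statements merged into one kernel-verified Lean document; each statement's English description precedes it below -/
import Mathlib

section
/- Let F : H → H be quasi-nonexpansive with nonempty fixed point set, and suppose F is linearly regular with constant κ > 0, i.e., d_{Fix(F)}(x) ≤ κ‖F(x) − x‖ for all x. For α ∈ (0,1), the relaxation F_α := Id + α(F − Id) satisfies d_{Fix(F)}(F_α(x)) ≤ √(1 − α(1−α)/κ²) · d_{Fix(F)}(x) for all x ∈ H. -/
/-!
For a fixed point `y` of `F`, the relaxed step `x + α (F x - x)` is the convex combination
`(1 - α) x + α F x`, so in a Hilbert space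
`‖x_α - y‖² = (1 - α) ‖x - y‖² + α ‖F x - y‖² - α (1 - α) ‖F x - x‖²`.
Quasi-nonexpansiveness bounds the middle term by `α ‖x - y‖²`, and passing to the infimum over
`y` gives `d(x_α)² ≤ d(x)² - α (1 - α) ‖F x - x‖²`. Linear regularity turns the last term into
`α (1 - α) d(x)² / κ²`.
-/

open Metric

lemma norm_add_smul_sq_eq {E : Type*} [NormedAddCommGroup E] [InnerProductSpace ℝ E]
    (u v : E) (α : ℝ) :
    ‖v + α • u‖ ^ 2 = (1 - α) * ‖v‖ ^ 2 + α * ‖v + u‖ ^ 2 - α * (1 - α) * ‖u‖ ^ 2 := by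
  rw [norm_add_sq_real, norm_add_sq_real, real_inner_smul_right, norm_smul, mul_pow,
    Real.norm_eq_abs, sq_abs]
  ring

lemma norm_relaxation_sub_sq_add_le {E : Type*} [NormedAddCommGroup E] [InnerProductSpace ℝ E]
    {x p y : E} {α : ℝ} (hα : 0 ≤ α) (hp : ‖p - y‖ ≤ ‖x - y‖) :
    ‖x + α • (p - x) - y‖ ^ 2 + α * (1 - α) * ‖p - x‖ ^ 2 ≤ ‖x - y‖ ^ 2 := by
  have hsq : ‖p - y‖ ^ 2 ≤ ‖x - y‖ ^ 2 := pow_le_pow_left₀ (norm_nonneg _) hp 2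
  have hcombo := norm_add_smul_sq_eq (p - x) (x - y) α
  rw [sub_add_sub_cancel', ← add_sub_right_comm] at hcombo
  nlinarith [mul_le_mul_of_nonneg_left hsq hα]

lemma infDist_sq_add_le_of_forall_dist_sq {X : Type*} [PseudoMetricSpace X] {s : Set X}
    (hs : s.Nonempty) {x z : X} {c : ℝ} (h : ∀ y ∈ s, dist z y ^ 2 + c ≤ dist x y ^ 2) :
    infDist z s ^ 2 + c ≤ infDist x s ^ 2 := by
  set a := infDist z s ^ 2 + c
  have ha : ∀ y ∈ s, a ≤ dist x y ^ 2 := fun y hy =>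
    (add_le_add_left (pow_le_pow_left₀ infDist_nonneg (infDist_le_dist_of_mem hy) 2) c).trans
      (h y hy)
  have hsqrt : √a ≤ infDist x s := (le_infDist hs).2 fun y hy =>
    (Real.sqrt_le_sqrt (ha y hy)).trans_eq (Real.sqrt_sq dist_nonneg)
  calc a ≤ √a ^ 2 := Real.sq_sqrt' ▸ le_max_left a 0
    _ ≤ infDist x s ^ 2 := pow_le_pow_left₀ (Real.sqrt_nonneg a) hsqrt 2

theorem relaxation_contracts_distance_sqrt_general
    {H : Type*} [NormedAddCommGroup H] [InnerProductSpace ℝ H]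
    (F : H → H)
    (hQNE : ∀ x y, F y = y → ‖F x - y‖ ≤ ‖x - y‖)
    (hne : ∃ y, F y = y)
    (κ : ℝ)
    (hreg : ∀ x, Metric.infDist x {y : H | F y = y} ≤ κ * ‖F x - x‖)
    (α : ℝ) (hα : α ∈ Set.Ioo (0 : ℝ) 1) :
    ∀ x : H,
      Metric.infDist (x + α • (F x - x)) {y : H | F y = y} ≤
        Real.sqrt (1 - α * (1 - α) / κ ^ 2) * Metric.infDist x {y : H | F y = y} := by
  intro x
  set S : Set H := {y : H | F y = y}
  set d := infDist x S
  set dα := infDist (x + α • (F x - x)) S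
  have hdecrease : dα ^ 2 + α * (1 - α) * ‖F x - x‖ ^ 2 ≤ d ^ 2 :=
    infDist_sq_add_le_of_forall_dist_sq hne fun y hy => by
      simpa only [dist_eq_norm] using norm_relaxation_sub_sq_add_le hα.1.le (hQNE x y hy)
  have hregsq : d ^ 2 / κ ^ 2 ≤ ‖F x - x‖ ^ 2 :=
    div_le_of_le_mul₀ (sq_nonneg κ) (sq_nonneg _) <| by
      rw [← mul_pow, mul_comm]; exact pow_le_pow_left₀ infDist_nonneg (hreg x) 2
  have hsq : dα ^ 2 ≤ (1 - α * (1 - α) / κ ^ 2) * d ^ 2 := by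
    have hα' : 0 ≤ α * (1 - α) := mul_nonneg hα.1.le (sub_nonneg.2 hα.2.le)
    have hgain := mul_le_mul_of_nonneg_left hregsq hα'
    rw [sub_mul, one_mul, div_mul_eq_mul_div, mul_div_assoc]
    linarith
  calc dα = √(dα ^ 2) := (Real.sqrt_sq infDist_nonneg).symm
    _ ≤ √((1 - α * (1 - α) / κ ^ 2) * d ^ 2) := Real.sqrt_le_sqrt hsq
    _ = √(1 - α * (1 - α) / κ ^ 2) * d := by
      rw [Real.sqrt_mul' _ (sq_nonneg d), Real.sqrt_sq infDist_nonneg]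

/-- If `F` is quasi-nonexpansive with nonempty fixed point set and linearly regular with
constant `κ > 0`, then for `α ∈ (0,1)` the relaxation `F_α = Id + α(F - Id)` satisfies
`d_{Fix F}(F_α x) ≤ √(1 - α(1-α)/κ²) d_{Fix F}(x)`. -/
theorem relaxation_contracts_distance_sqrt
    {H : Type*} [NormedAddCommGroup H] [InnerProductSpace ℝ H]
    (F : H → H)
    (hQNE : ∀ x y, F y = y → ‖F x - y‖ ≤ ‖x - y‖)
    (hne : ∃ y, F y = y)
    (κ : ℝ) (hκ : 0 < κ)
    (hreg : ∀ x, Metric.infDist x {y : H | F y = y} ≤ κ * ‖F x - x‖)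
    (α : ℝ) (hα : α ∈ Set.Ioo (0 : ℝ) 1) :
    ∀ x : H,
      Metric.infDist (x + α • (F x - x)) {y : H | F y = y} ≤
        Real.sqrt (1 - α * (1 - α) / κ ^ 2) * Metric.infDist x {y : H | F y = y} :=
  relaxation_contracts_distance_sqrt_general F hQNE hne κ hreg α hα
end

section
/- Let F : H → H be quasi-nonexpansive with Fix(F) ≠ ∅, linearly regular with constant κ > 0. Fix δ ∈ (0,1) and assume α(1−α) ≤ κ². Then for all α ∈ (0, 1−δ], the relaxation F_α := Id + α(F − Id) satisfies d_{Fix(F)}(F_α(x)) ≤ (1 − δα/(4κ²)) d_{Fix(F)}(x) for all x ∈ H. -/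
/-!
For a fixed point `y`, the relaxation `F_α x = x + α (F x - x)` is a convex combination of `x`
and `F x`, so the parallelogram law gives
`‖F_α x - y‖² = (1 - α)‖x - y‖² + α‖F x - y‖² - α(1 - α)‖F x - x‖²`.
Quasi-nonexpansiveness and an infimum over `y` turn this into
`d(F_α x)² ≤ d(x)² - α(1 - α)‖F x - x‖²`, with `d` the distance to `Fix F`, and linear
regularity bounds the loss from below by `α(1 - α) d(x)² / κ² ≥ s d(x)²`, `s = δα / κ² ≤ 1`.
Finally `√(1 - s) ≤ 1 - s / 2 ≤ 1 - s / 4`.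
-/

open Metric

section InnerProduct

variable {E : Type*} [NormedAddCommGroup E] [InnerProductSpace ℝ E]

theorem norm_add_smul_sub_sub_sq (x z y : E) (α : ℝ) :
    ‖x + α • (z - x) - y‖ ^ 2 =
      (1 - α) * ‖x - y‖ ^ 2 + α * ‖z - y‖ ^ 2 - α * (1 - α) * ‖z - x‖ ^ 2 := by
  have hz : z - y = (x - y) + (z - x) := by abel
  have hx : x + α • (z - x) - y = (x - y) + α • (z - x) := by abel
  rw [hz, hx, norm_add_sq_real, norm_add_sq_real, real_inner_smul_right, norm_smul,
    Real.norm_eq_abs, mul_pow, sq_abs]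
  ring

theorem norm_add_smul_sub_sub_sq_le {x z y : E} {α : ℝ} (hα : 0 ≤ α)
    (hz : ‖z - y‖ ≤ ‖x - y‖) :
    ‖x + α • (z - x) - y‖ ^ 2 ≤ ‖x - y‖ ^ 2 - α * (1 - α) * ‖z - x‖ ^ 2 := by
  have hz2 : ‖z - y‖ ^ 2 ≤ ‖x - y‖ ^ 2 := pow_le_pow_left₀ (norm_nonneg _) hz 2
  rw [norm_add_smul_sub_sub_sq]
  nlinarith

end InnerProduct

theorem Metric.le_infDist_of_forall_le {α : Type*} [PseudoMetricSpace α] {x : α} {s : Set α}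
    {r : ℝ} (hs : s.Nonempty) (h : ∀ y ∈ s, r ≤ dist x y) : r ≤ infDist x s :=
  not_lt.1 fun hlt ↦
    let ⟨y, hy, hlt'⟩ := (infDist_lt_iff hs).1 hlt
    (h y hy).not_gt hlt'

theorem infDist_relaxation_sq_add_le {H : Type*} [NormedAddCommGroup H]
    [InnerProductSpace ℝ H] {F : H → H} (hQNE : ∀ x y, F y = y → ‖F x - y‖ ≤ ‖x - y‖)
    (hne : ∃ y, F y = y) {α : ℝ} (hα : 0 ≤ α) (x : H) :
    infDist (x + α • (F x - x)) {y | F y = y} ^ 2 + α * (1 - α) * ‖F x - x‖ ^ 2 ≤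
      infDist x {y | F y = y} ^ 2 := by
  rw [← Real.sqrt_le_left infDist_nonneg]
  refine le_infDist_of_forall_le hne fun y hy ↦ ?_
  have hd : infDist (x + α • (F x - x)) {y | F y = y} ≤ ‖x + α • (F x - x) - y‖ := by
    simpa [dist_eq_norm] using infDist_le_dist_of_mem hy
  rw [Real.sqrt_le_left dist_nonneg, dist_eq_norm]
  have := norm_add_smul_sub_sub_sq_le hα (hQNE x y hy)
  nlinarith [pow_le_pow_left₀ infDist_nonneg hd 2]

theorem le_one_sub_half_mul_of_sq_le {a b s : ℝ} (hs : s ≤ 2) (hb : 0 ≤ b)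
    (h : a ^ 2 ≤ (1 - s) * b ^ 2) : a ≤ (1 - s / 2) * b := by
  refine le_of_sq_le_sq ?_ (by nlinarith)
  nlinarith [sq_nonneg (s * b)]

/-- Lemma 7 (l1) of the paper: for a quasi-nonexpansive, linearly regular operator `F`
with constant `κ > 0`, any `δ ∈ (0,1)`, and `α ∈ (0, 1-δ]` with `α(1-α) ≤ κ²`,
the relaxation `F_α = Id + α(F - Id)` satisfies
`d_{Fix F}(F_α x) ≤ (1 - δα/(4κ²)) d_{Fix F}(x)`. -/
theorem relaxation_linear_contraction
    {H : Type*} [NormedAddCommGroup H] [InnerProductSpace ℝ H]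
    (F : H → H)
    (hQNE : ∀ x y, F y = y → ‖F x - y‖ ≤ ‖x - y‖)
    (hne : ∃ y, F y = y)
    (κ : ℝ) (hκ : 0 < κ)
    (hreg : ∀ x, Metric.infDist x {y : H | F y = y} ≤ κ * ‖F x - x‖)
    (δ : ℝ) (hδ : δ ∈ Set.Ioo (0 : ℝ) 1)
    (α : ℝ) (hα : 0 < α) (hα' : α ≤ 1 - δ)
    (hκα : α * (1 - α) ≤ κ ^ 2) :
    ∀ x : H,
      Metric.infDist (x + α • (F x - x)) {y : H | F y = y} ≤
        (1 - δ * α / (4 * κ ^ 2)) * Metric.infDist x {y : H | F y = y} := by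
  intro x
  set d := infDist x {y | F y = y}
  set s := δ * α / κ ^ 2
  have hκ2 : 0 < κ ^ 2 := by positivity
  have hδα : δ * α ≤ α * (1 - α) := by nlinarith
  have hs₀ : 0 ≤ s := div_nonneg (mul_nonneg hδ.1.le hα.le) hκ2.le
  have hs₁ : s ≤ 1 := (div_le_one hκ2).2 (hδα.trans hκα)
  have hd : 0 ≤ d := infDist_nonneg
  have hreg_sq : d ^ 2 ≤ κ ^ 2 * ‖F x - x‖ ^ 2 := by
    rw [← mul_pow]; exact pow_le_pow_left₀ hd (hreg x) 2
  have hloss : s * d ^ 2 ≤ α * (1 - α) * ‖F x - x‖ ^ 2 := by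
    rw [div_mul_eq_mul_div, div_le_iff₀ hκ2]
    nlinarith [mul_le_mul_of_nonneg_left hreg_sq (mul_nonneg hδ.1.le hα.le)]
  have hstep := infDist_relaxation_sq_add_le hQNE hne hα.le x
  calc infDist (x + α • (F x - x)) {y | F y = y}
      ≤ (1 - s / 2) * d :=
        le_one_sub_half_mul_of_sq_le (by linarith) hd (by linarith)
    _ ≤ (1 - s / 4) * d := by gcongr; linarith
    _ = (1 - δ * α / (4 * κ ^ 2)) * d := by simp only [s]; ring
end

section
/- Let F : H → H (H a real Hilbert space) be quasi-nonexpansive with nonempty fixed point set and linearly regular with constant κ > 0, and fix δ ∈ (0,1). Consider the relaxed Krasnosel'skiĭ–Mann iteration x_{k+1} = x_k + α(F(x_k) − x_k) with constant stepsize α ∈ (0, 1−δ] and α(1−α) ≤ κ². Then d_{Fix(F)}(x_k) ≤ (1 − δα/(4κ²))^k d_{Fix(F)}(x_0) for all k ≥ 0, i.e., the iteration converges to Fix(F) at a linear (geometric) rate. -/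
/-!
For a fixed point `y`, quasi-nonexpansiveness gives `2⟪x - y, F x - x⟫ ≤ -‖F x - x‖²`, so one
relaxed step `x ↦ x + α (F x - x)` decreases `‖x - y‖²` by at least `α(1-α)‖F x - x‖²`. Taking
the infimum over fixed points, the same decrease holds for `d(x)² = d_{Fix F}(x)²`, and linear
regularity `d(x) ≤ κ ‖F x - x‖` turns it into `d(F_α x)² ≤ (1 - α(1-α)/κ²) d(x)²`. With
`t = δα/(4κ²)` and `δ ≤ 1 - α` this is at most `(1 - 4t) d(x)² ≤ (1 - t)² d(x)²`; iterating
gives the rate.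
-/

open Metric Function

lemma sq_infDist_add_le_sq_infDist {X : Type*} [PseudoMetricSpace X] {s : Set X} {w z : X}
    {a : ℝ} (hs : s.Nonempty) (h : ∀ y ∈ s, dist w y ^ 2 + a ≤ dist z y ^ 2) :
    infDist w s ^ 2 + a ≤ infDist z s ^ 2 := by
  have hsqrt : √(infDist w s ^ 2 + a) ≤ infDist z s := by
    refine (le_infDist hs).2 fun y hy => Real.sqrt_le_iff.2 ⟨dist_nonneg, ?_⟩
    have hwy : infDist w s ^ 2 ≤ dist w y ^ 2 :=
      pow_le_pow_left₀ infDist_nonneg (infDist_le_dist_of_mem hy) 2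
    linarith [h y hy]
  exact (Real.sqrt_le_iff.1 hsqrt).2

section Relaxation

variable {H : Type*} [NormedAddCommGroup H] [InnerProductSpace ℝ H]

def QuasiNonexpansive (F : H → H) : Prop :=
  ∀ x y, F y = y → ‖F x - y‖ ≤ ‖x - y‖

def LinearlyRegular (F : H → H) (κ : ℝ) : Prop :=
  ∀ x, infDist x (fixedPoints F) ≤ κ * ‖F x - x‖

/-- The paper's `F_α`. -/
def relaxation (F : H → H) (α : ℝ) (x : H) : H :=
  x + α • (F x - x)

lemma norm_relaxation_sub_sq_le {F : H → H} (hF : QuasiNonexpansive F) {α : ℝ} (hα : 0 ≤ α)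
    (x : H) {y : H} (hy : F y = y) :
    ‖relaxation F α x - y‖ ^ 2 ≤ ‖x - y‖ ^ 2 - α * (1 - α) * ‖F x - x‖ ^ 2 := by
  have hinner : 2 * inner ℝ (x - y) (F x - x) ≤ -‖F x - x‖ ^ 2 := by
    have h := pow_le_pow_left₀ (norm_nonneg _) (hF x y hy) 2
    rw [show F x - y = (x - y) + (F x - x) by abel, norm_add_sq_real] at h
    linarith
  have hexpand : ‖relaxation F α x - y‖ ^ 2 =
      ‖x - y‖ ^ 2 + α * (2 * inner ℝ (x - y) (F x - x)) + α ^ 2 * ‖F x - x‖ ^ 2 := by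
    rw [relaxation, show x + α • (F x - x) - y = (x - y) + α • (F x - x) by abel,
      norm_add_sq_real, real_inner_smul_right, norm_smul, Real.norm_eq_abs, abs_of_nonneg hα]
    ring
  rw [hexpand]
  nlinarith [mul_le_mul_of_nonneg_left hinner hα]

lemma sq_infDist_relaxation_add_le {F : H → H} (hF : QuasiNonexpansive F) {α : ℝ} (hα : 0 ≤ α)
    (hne : (fixedPoints F).Nonempty) (x : H) :
    infDist (relaxation F α x) (fixedPoints F) ^ 2 + α * (1 - α) * ‖F x - x‖ ^ 2 ≤
      infDist x (fixedPoints F) ^ 2 :=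
  sq_infDist_add_le_sq_infDist hne fun y hy => by
    rw [dist_eq_norm, dist_eq_norm]
    linarith [norm_relaxation_sub_sq_le hF hα x hy]

noncomputable def kmRate (κ δ α : ℝ) : ℝ :=
  1 - δ * α / (4 * κ ^ 2)

lemma kmRate_nonneg {κ δ α : ℝ} (hα : 0 ≤ α) (hα' : α ≤ 1 - δ) (hκα : α * (1 - α) ≤ κ ^ 2) :
    0 ≤ kmRate κ δ α := by
  have h : δ * α / (4 * κ ^ 2) ≤ 1 :=
    div_le_of_le_mul₀ (by positivity) zero_le_one (by nlinarith)
  rw [kmRate]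
  linarith

lemma infDist_relaxation_le {F : H → H} (hF : QuasiNonexpansive F) {κ δ α : ℝ} (hκ : 0 < κ)
    (hreg : LinearlyRegular F κ)
    (hδ : 0 ≤ δ) (hα : 0 < α) (hα' : α ≤ 1 - δ) (hκα : α * (1 - α) ≤ κ ^ 2) (x : H) :
    infDist (relaxation F α x) (fixedPoints F) ≤ kmRate κ δ α * infDist x (fixedPoints F) := by
  rcases (fixedPoints F).eq_empty_or_nonempty with hempty | hne
  · simp [hempty]
  set d := infDist x (fixedPoints F)
  set t := δ * α / (4 * κ ^ 2) with ht
  have hdecrease := sq_infDist_relaxation_add_le hF hα.le hne x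
  have hreg_sq : d ^ 2 ≤ κ ^ 2 * ‖F x - x‖ ^ 2 := by
    rw [← mul_pow]
    exact pow_le_pow_left₀ infDist_nonneg (hreg x) 2
  have hδα : 4 * t * κ ^ 2 = α * δ := by
    rw [ht]
    field_simp
  have ht0 : 0 ≤ t := by positivity
  have hsq : infDist (relaxation F α x) (fixedPoints F) ^ 2 ≤ (kmRate κ δ α * d) ^ 2 :=
    calc infDist (relaxation F α x) (fixedPoints F) ^ 2
        ≤ d ^ 2 - α * (1 - α) * ‖F x - x‖ ^ 2 := by linarith
      _ ≤ d ^ 2 - 4 * t * (κ ^ 2 * ‖F x - x‖ ^ 2) := by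
        rw [← mul_assoc, hδα]
        gcongr
        linarith
      _ ≤ d ^ 2 - 4 * t * d ^ 2 := by gcongr
      _ ≤ (kmRate κ δ α * d) ^ 2 := by
        rw [kmRate, ← ht]
        nlinarith [sq_nonneg (t * d)]
  exact (pow_le_pow_iff_left₀ infDist_nonneg
    (mul_nonneg (kmRate_nonneg hα.le hα' hκα) infDist_nonneg) two_ne_zero).1 hsq

end Relaxation

theorem KM_linear_convergence_general
    {H : Type*} [NormedAddCommGroup H] [InnerProductSpace ℝ H]
    (F : H → H)
    (hQNE : ∀ x y, F y = y → ‖F x - y‖ ≤ ‖x - y‖)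
    (κ : ℝ) (hκ : 0 < κ)
    (hreg : ∀ x, Metric.infDist x {y : H | F y = y} ≤ κ * ‖F x - x‖)
    (δ : ℝ) (hδ : δ ∈ Set.Ioo (0 : ℝ) 1)
    (α : ℝ) (hα : 0 < α) (hα' : α ≤ 1 - δ)
    (hκα : α * (1 - α) ≤ κ ^ 2)
    (x : ℕ → H)
    (hrec : ∀ k, x (k + 1) = x k + α • (F (x k) - x k)) :
    ∀ k, Metric.infDist (x k) {y : H | F y = y} ≤
      (1 - δ * α / (4 * κ ^ 2)) ^ k * Metric.infDist (x 0) {y : H | F y = y} := by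
  intro k
  refine le_geom (u := fun k => infDist (x k) (fixedPoints F)) (kmRate_nonneg hα.le hα' hκα) k
    fun j _ => ?_
  rw [hrec j]
  exact infDist_relaxation_le hQNE hκ hreg hδ.1.le hα hα' hκα (x j)

/-- Centralized linear convergence of the relaxed Krasnosel'skiĭ–Mann iteration:
for `F` quasi-nonexpansive, linearly regular with constant `κ > 0`, `δ ∈ (0,1)`,
`α ∈ (0, 1-δ]` with `α(1-α) ≤ κ²`, the iterates `x_{k+1} = x_k + α(F(x_k) - x_k)`
satisfy `d_{Fix F}(x_k) ≤ (1 - δα/(4κ²))^k d_{Fix F}(x_0)`. -/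
theorem KM_linear_convergence
    {H : Type*} [NormedAddCommGroup H] [InnerProductSpace ℝ H]
    (F : H → H)
    (hQNE : ∀ x y, F y = y → ‖F x - y‖ ≤ ‖x - y‖)
    (hne : ∃ y, F y = y)
    (κ : ℝ) (hκ : 0 < κ)
    (hreg : ∀ x, Metric.infDist x {y : H | F y = y} ≤ κ * ‖F x - x‖)
    (δ : ℝ) (hδ : δ ∈ Set.Ioo (0 : ℝ) 1)
    (α : ℝ) (hα : 0 < α) (hα' : α ≤ 1 - δ)
    (hκα : α * (1 - α) ≤ κ ^ 2)
    (x : ℕ → H)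
    (hrec : ∀ k, x (k + 1) = x k + α • (F (x k) - x k)) :
    ∀ k, Metric.infDist (x k) {y : H | F y = y} ≤
      (1 - δ * α / (4 * κ ^ 2)) ^ k * Metric.infDist (x 0) {y : H | F y = y} :=
  KM_linear_convergence_general F hQNE κ hκ hreg δ hδ α hα hα' hκα x hrec
end
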